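/- arXiv:2512.12202 — 8 statements merged into one kernel-verified Lean document; each statement's English description precedes it below -/
import Mathlib

section
/- Assume p ≥ 1 and that every arrival time satisfies 0 ≤ t_j ≤ μ₁·D̃. Let y be a greedy assignment and let y* be any assignment, with ℓ*_{i,j}(t) the load of machine i at time slot t under y* (using the true durations) after the first j jobs, and ℓ*_i(t) = ℓ*_{i,n}(t). Then for every job j: Σ_{t=1}^{T̃} [ (Σ_{i=1}^m ℓ̃_{i,j}(t)^p)^{q/p} − (Σ_{i=1}^m ℓ̃_{i,j−1}(t)^p)^{q/p} ] ≤ μ · Σ_{t=1}^{T̃} [ (Σ_{i=1}^m (ℓ̃_i(t) + ℓ*_{i,j}(t))^p)^{q/p} − (Σ_{i=1}^m (ℓ̃_i(t) + ℓ*_{i,j−1}(t))^p)^{q/p} ]. -/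
/-!
Let `g s` be the increase of `‖ℓ̃_{j-1}(s)‖_p^q` caused by putting job `j` on machine `y*(j)`.
The left side only sees the `L = ⌊μ₁ d̃_j⌋` slots of job `j`'s pseudo-interval, and by the greedy
choice it is at most the sum of `g` over them. Every earlier job arrived by `t_j`, so `ℓ̃_{j-1}` is
nonincreasing after `t_j`. The increment of `‖·‖_p^q` along a coordinate grows with the base point
(convexity of `x ↦ x^p` and `x ↦ x^(q/p)`), so `g` is nonincreasing too, and Chebyshev's sum
inequality bounds its sum over `L ≤ μ d_j` slots by `μ` times its sum over the first `d_j` slots.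
There, the same monotonicity and `ℓ̃_{j-1} ≤ ℓ̃ + ℓ*_{j-1}` bound `g` by the right-hand summand,
which vanishes outside job `j`'s true interval.
-/

open Finset

/-- True load of machine `i` at integer time slot `s` after the first `j` jobs
(0-indexed: jobs with index `< j`), under assignment `y`, arrival times `t`,
true integer durations `d` and loads `P`. -/
noncomputable def trueLoad (m n : ℕ) (P : Fin m → Fin n → ℝ) (t d : Fin n → ℕ)
    (y : Fin n → Fin m) (j : ℕ) (i : Fin m) (s : ℕ) : ℝ :=
  ∑ k ∈ Finset.univ.filter
      (fun k : Fin n => (k : ℕ) < j ∧ y k = i ∧ t k + 1 ≤ s ∧ s ≤ t k + d k),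
    P i k

/-- Pseudo-load of machine `i` at integer time slot `s` after the first `j`
jobs, using the overestimated durations `⌊μ₁ · d̃ₖ⌋`. -/
noncomputable def pseudoLoad (m n : ℕ) (P : Fin m → Fin n → ℝ) (t : Fin n → ℕ)
    (dtil : Fin n → ℝ) (μ₁ : ℝ) (y : Fin n → Fin m) (j : ℕ) (i : Fin m) (s : ℕ) : ℝ :=
  ∑ k ∈ Finset.univ.filter
      (fun k : Fin n => (k : ℕ) < j ∧ y k = i ∧ t k + 1 ≤ s ∧ s ≤ t k + ⌊μ₁ * dtil k⌋₊),
    P i k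

/-- The greedy condition: job `j` is assigned to a machine minimizing the total
increase, over the time slots `t_j+1, …, t_j+⌊μ₁·d̃_j⌋`, of
`(Σ_z ℓ̃_z^p)^(q/p)` computed with the pseudo-loads of the first `j-1` jobs. -/
def IsGreedy (m n : ℕ) (P : Fin m → Fin n → ℝ) (t : Fin n → ℕ) (dtil : Fin n → ℝ)
    (μ₁ p q : ℝ) (y : Fin n → Fin m) : Prop :=
  ∀ (j : Fin n) (i' : Fin m),
    ∑ s ∈ Finset.Icc (t j + 1) (t j + ⌊μ₁ * dtil j⌋₊),
      ((∑ z, (pseudoLoad m n P t dtil μ₁ y j z s + if z = y j then P z j else 0) ^ p) ^ (q / p)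
        - (∑ z, pseudoLoad m n P t dtil μ₁ y j z s ^ p) ^ (q / p))
    ≤ ∑ s ∈ Finset.Icc (t j + 1) (t j + ⌊μ₁ * dtil j⌋₊),
      ((∑ z, (pseudoLoad m n P t dtil μ₁ y j z s + if z = i' then P z j else 0) ^ p) ^ (q / p)
        - (∑ z, pseudoLoad m n P t dtil μ₁ y j z s ^ p) ^ (q / p))

theorem ConvexOn.sub_le_sub_of_le {s : Set ℝ} {f : ℝ → ℝ} (hf : ConvexOn ℝ s f) {a b c : ℝ}
    (ha : a ∈ s) (hbc : b + c ∈ s) (hab : a ≤ b) (hc : 0 ≤ c) :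
    f (a + c) - f a ≤ f (b + c) - f b := by
  rcases (add_nonneg (sub_nonneg.2 hab) hc).eq_or_lt with h | h
  · obtain rfl : c = 0 := by linarith
    obtain rfl : b = a := by linarith
    rfl
  -- `b` and `a + c` are the two mirror-image convex combinations of `a` and `b + c`
  set θ := c / (b - a + c)
  have hθ : θ * (b - a + c) = c := div_mul_cancel₀ c h.ne'
  have h₁ := hf.2 ha hbc (div_nonneg hc h.le) (sub_nonneg.2 (div_le_one_of_le₀ (by linarith) h.le))
    (add_sub_cancel θ 1)
  have h₂ := hf.2 ha hbc (sub_nonneg.2 (div_le_one_of_le₀ (by linarith) h.le)) (div_nonneg hc h.le)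
    (sub_add_cancel 1 θ)
  rw [smul_eq_mul, smul_eq_mul, show θ * a + (1 - θ) * (b + c) = b by linear_combination -hθ]
    at h₁
  rw [smul_eq_mul, smul_eq_mul, show (1 - θ) * a + θ * (b + c) = a + c by linear_combination hθ]
    at h₂
  simp only [smul_eq_mul] at h₁ h₂
  linarith

theorem card_mul_sum_Icc_le_mul_sum_Icc {g : ℕ → ℝ} {a k l : ℕ}
    (hg : AntitoneOn g (Set.Ici (a + 1))) (hkl : k ≤ l) :
    (k : ℝ) * ∑ s ∈ Icc (a + 1) (a + l), g s ≤ l * ∑ s ∈ Icc (a + 1) (a + k), g s := by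
  have hshift : ∀ l, ∑ s ∈ Icc (a + 1) (a + l), g s = ∑ i ∈ range l, g (a + 1 + i) := by
    intro l
    rw [← Ico_add_one_right_eq_Icc, sum_Ico_eq_sum_range]
    congr 2; omega
  have hanti : Antitone fun i => g (a + 1 + i) := fun i i' hii' =>
    hg (by simp) (by simp) (by omega)
  have hind : Antitone fun i : ℕ => if i < k then (1 : ℝ) else 0 := fun i i' hii' => by
    dsimp only
    split_ifs <;> first | omega | norm_num
  have hfilter : (range l).filter (· < k) = range k := by
    ext i; simp only [mem_filter, mem_range]; omega
  -- Chebyshev's sum inequality for `g` and the indicator of `[0, k)`, both antitone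
  have := (hind.monovary hanti).monovaryOn (range l) |>.sum_mul_sum_le_card_mul_sum
  simp only [sum_ite, sum_const_zero, sum_const, nsmul_eq_mul, mul_one, ite_mul, one_mul,
    zero_mul, card_range, add_zero, hfilter] at this
  rwa [hshift, hshift]

theorem sum_Icc_le_mul_sum_Icc {g : ℕ → ℝ} {a k l : ℕ} {μ : ℝ} (hg₀ : 0 ≤ g)
    (hg : AntitoneOn g (Set.Ici (a + 1))) (hk : 1 ≤ k) (hkl : k ≤ l) (hlμ : (l : ℝ) ≤ μ * k) :
    ∑ s ∈ Icc (a + 1) (a + l), g s ≤ μ * ∑ s ∈ Icc (a + 1) (a + k), g s := by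
  have hk₀ : (0 : ℝ) < k := by exact_mod_cast hk
  refine le_of_mul_le_mul_left ?_ hk₀
  calc (k : ℝ) * ∑ s ∈ Icc (a + 1) (a + l), g s
      ≤ l * ∑ s ∈ Icc (a + 1) (a + k), g s := card_mul_sum_Icc_le_mul_sum_Icc hg hkl
    _ ≤ μ * k * ∑ s ∈ Icc (a + 1) (a + k), g s :=
      mul_le_mul_of_nonneg_right hlμ (sum_nonneg fun s _ => hg₀ s)
    _ = k * (μ * ∑ s ∈ Icc (a + 1) (a + k), g s) := by ring

section Potential

variable {ι : Type*} [Fintype ι] {p r : ℝ} {u v : ι → ℝ}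

/-- `‖u‖_p ^ q`, written as `(∑ᵢ uᵢ ^ p) ^ r` with `r = q / p` as in the greedy rule. -/
noncomputable def potential (p r : ℝ) (u : ι → ℝ) : ℝ := (∑ i, u i ^ p) ^ r

theorem sum_rpow_le_sum_rpow (hp : 0 ≤ p) (hu : 0 ≤ u) (huv : u ≤ v) :
    ∑ i, u i ^ p ≤ ∑ i, v i ^ p :=
  sum_le_sum fun i _ => Real.rpow_le_rpow (hu i) (huv i) hp

theorem potential_mono (hp : 0 ≤ p) (hr : 0 ≤ r) (hu : 0 ≤ u) (huv : u ≤ v) :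
    potential p r u ≤ potential p r v :=
  Real.rpow_le_rpow (sum_nonneg fun i _ => Real.rpow_nonneg (hu i) p)
    (sum_rpow_le_sum_rpow hp hu huv) hr

variable [DecidableEq ι]

theorem sum_rpow_add_single (p : ℝ) (u : ι → ℝ) (i : ι) (c : ℝ) :
    ∑ z, (u + Pi.single i c : ι → ℝ) z ^ p = ∑ z, u z ^ p + ((u i + c) ^ p - u i ^ p) := by
  rw [← sub_eq_iff_eq_add', ← sum_sub_distrib, sum_eq_single i]
  · simp
  · intro z _ hz
    simp [hz]
  · simp

theorem potential_add_single_sub_le (hp : 1 ≤ p) (hr : 1 ≤ r) (hu : 0 ≤ u) (huv : u ≤ v)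
    (i : ι) {c : ℝ} (hc : 0 ≤ c) :
    potential p r (u + Pi.single i c) - potential p r u
      ≤ potential p r (v + Pi.single i c) - potential p r v := by
  have hv : 0 ≤ v := hu.trans huv
  have hδ : (u i + c) ^ p - u i ^ p ≤ (v i + c) ^ p - v i ^ p :=
    (convexOn_rpow hp).sub_le_sub_of_le (hu i) (add_nonneg (hv i) hc) (huv i) hc
  have hδ₀ : 0 ≤ (v i + c) ^ p - v i ^ p :=
    sub_nonneg.2 (Real.rpow_le_rpow (hv i) (le_add_of_nonneg_right hc) (by linarith))
  have hS : 0 ≤ ∑ z, u z ^ p := sum_nonneg fun z _ => Real.rpow_nonneg (hu z) p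
  have hSuv : ∑ z, u z ^ p ≤ ∑ z, v z ^ p := sum_rpow_le_sum_rpow (by linarith) hu huv
  simp only [potential, sum_rpow_add_single]
  calc (∑ z, u z ^ p + ((u i + c) ^ p - u i ^ p)) ^ r - (∑ z, u z ^ p) ^ r
      ≤ (∑ z, u z ^ p + ((v i + c) ^ p - v i ^ p)) ^ r - (∑ z, u z ^ p) ^ r := by
        gcongr
        rw [← sum_rpow_add_single]
        exact sum_nonneg fun z _ => Real.rpow_nonneg (add_nonneg hu (Pi.single_nonneg.2 hc) z) p
    _ ≤ (∑ z, v z ^ p + ((v i + c) ^ p - v i ^ p)) ^ r - (∑ z, v z ^ p) ^ r :=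
      (convexOn_rpow hr).sub_le_sub_of_le hS (add_nonneg (hS.trans hSuv) hδ₀) hSuv hδ₀

theorem potential_add_single_sub_nonneg (hp : 0 ≤ p) (hr : 0 ≤ r) (hu : 0 ≤ u) (i : ι) {c : ℝ}
    (hc : 0 ≤ c) : 0 ≤ potential p r (u + Pi.single i c) - potential p r u :=
  sub_nonneg.2 (potential_mono hp hr hu (le_add_of_nonneg_right (Pi.single_nonneg.2 hc)))

end Potential

theorem sum_filter_lt_succ {β : Type*} [AddCommMonoid β] {n : ℕ} (j : Fin n) (Q : Fin n → Prop)
    [DecidablePred Q] (f : Fin n → β) :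
    ∑ k ∈ univ.filter (fun k : Fin n => (k : ℕ) < j + 1 ∧ Q k), f k
      = ∑ k ∈ univ.filter (fun k : Fin n => (k : ℕ) < j ∧ Q k), f k + if Q j then f j else 0 := by
  have hsplit : univ.filter (fun k : Fin n => (k : ℕ) < j + 1 ∧ Q k)
      = (univ.filter fun k : Fin n => (k : ℕ) < j ∧ Q k) ∪ (univ.filter Q).filter (· = j) := by
    ext k
    simp only [mem_filter, mem_univ, true_and, mem_union, Nat.lt_succ_iff_lt_or_eq, ← Fin.ext_iff]
    tauto
  rw [hsplit, sum_union, filter_eq']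
  · by_cases hQ : Q j <;> simp [hQ]
  · simp only [disjoint_left, mem_filter, mem_univ, true_and]
    rintro k ⟨hk, -⟩ ⟨-, rfl⟩
    exact lt_irrefl _ hk

section Load

variable {m n : ℕ} (P : Fin m → Fin n → ℝ) (t d : Fin n → ℕ) (y : Fin n → Fin m)

theorem trueLoad_nonneg (hP : 0 ≤ P) (j s : ℕ) : 0 ≤ fun i => trueLoad m n P t d y j i s :=
  fun i => sum_nonneg fun k _ => hP i k

theorem trueLoad_mono_jobs (hP : 0 ≤ P) {j j' : ℕ} (hjj' : j ≤ j') (s : ℕ) :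
    (fun i => trueLoad m n P t d y j i s) ≤ fun i => trueLoad m n P t d y j' i s := by
  intro i
  refine sum_le_sum_of_subset_of_nonneg (fun k hk => ?_) fun k _ _ => hP i k
  simp only [mem_filter, mem_univ, true_and] at hk ⊢
  exact ⟨hk.1.trans_le hjj', hk.2⟩

theorem trueLoad_antitone_time (hmono : Monotone t) (hP : 0 ≤ P) (j : Fin n) {s s' : ℕ}
    (hs : t j + 1 ≤ s) (hss' : s ≤ s') :
    (fun i => trueLoad m n P t d y j i s') ≤ fun i => trueLoad m n P t d y j i s := by
  intro i
  refine sum_le_sum_of_subset_of_nonneg (fun k hk => ?_) fun k _ _ => hP i k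
  simp only [mem_filter, mem_univ, true_and] at hk ⊢
  have htk : t k ≤ t j := hmono (Fin.le_def.2 hk.1.le)
  exact ⟨hk.1, hk.2.1, by omega, by omega⟩

theorem trueLoad_succ (j : Fin n) (s : ℕ) :
    (fun i => trueLoad m n P t d y (j + 1) i s)
      = (fun i => trueLoad m n P t d y j i s)
        + if s ∈ Icc (t j + 1) (t j + d j) then Pi.single (y j) (P (y j) j) else 0 := by
  ext i
  rw [Pi.add_apply, trueLoad, sum_filter_lt_succ, trueLoad]
  congr 1
  simp only [mem_Icc]
  rcases eq_or_ne (y j) i with rfl | hi <;> split_ifs <;> simp_all [eq_comm]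

theorem sum_sub_trueLoad_succ (F : ℕ → (Fin m → ℝ) → ℝ) (j : Fin n) {S : Finset ℕ}
    (hS : Icc (t j + 1) (t j + d j) ⊆ S) :
    ∑ s ∈ S, (F s (fun i => trueLoad m n P t d y (j + 1) i s)
        - F s (fun i => trueLoad m n P t d y j i s))
      = ∑ s ∈ Icc (t j + 1) (t j + d j),
          (F s ((fun i => trueLoad m n P t d y j i s) + Pi.single (y j) (P (y j) j))
            - F s (fun i => trueLoad m n P t d y j i s)) := by
  refine (sum_subset hS fun s _ hs => ?_).symm.trans (sum_congr rfl fun s hs => ?_)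
  · rw [trueLoad_succ, if_neg hs, add_zero, sub_self]
  · rw [trueLoad_succ, if_pos hs]

end Load

theorem IsGreedy.sum_potential_le {m n : ℕ} {P : Fin m → Fin n → ℝ} {t : Fin n → ℕ}
    {dtil : Fin n → ℝ} {μ₁ p q : ℝ} {y : Fin n → Fin m}
    (hy : IsGreedy m n P t dtil μ₁ p q y) (j : Fin n) (i' : Fin m) :
    ∑ s ∈ Icc (t j + 1) (t j + ⌊μ₁ * dtil j⌋₊),
        (potential p (q / p)
            ((fun i => pseudoLoad m n P t dtil μ₁ y j i s) + Pi.single (y j) (P (y j) j))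
          - potential p (q / p) (fun i => pseudoLoad m n P t dtil μ₁ y j i s))
      ≤ ∑ s ∈ Icc (t j + 1) (t j + ⌊μ₁ * dtil j⌋₊),
        (potential p (q / p)
            ((fun i => pseudoLoad m n P t dtil μ₁ y j i s) + Pi.single i' (P i' j))
          - potential p (q / p) (fun i => pseudoLoad m n P t dtil μ₁ y j i s)) := by
  have hsingle : ∀ i : Fin m, Pi.single i (P i j) = fun z => if z = i then P z j else 0 := by
    intro i
    ext z
    rcases eq_or_ne z i with rfl | hz <;> simp [*]
  simpa only [potential, hsingle, Pi.add_apply] using hy j i'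

theorem one_le_add_logb_div {p T : ℝ} (hp : 0 < p) (hT : 1 ≤ T) :
    1 ≤ (p + Real.logb 2 T) / p := by
  rw [le_div_iff₀ hp]
  linarith [Real.logb_nonneg one_lt_two hT]

theorem add_natFloor_mul_le_natFloor_two_mul {μ x D : ℝ} {a : ℕ} (hμ : 0 ≤ μ) (hx : 0 ≤ x)
    (haD : (a : ℝ) ≤ μ * D) (hxD : x ≤ D) : a + ⌊μ * x⌋₊ ≤ ⌊2 * μ * D⌋₊ := by
  refine Nat.le_floor ?_
  push_cast
  nlinarith [Nat.floor_le (mul_nonneg hμ hx)]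

theorem natFloor_mul_le_mul_mul_of_natCeil_div_le {μ₁ μ₂ x : ℝ} {d : ℕ} (hμ₁ : 0 ≤ μ₁)
    (hμ₂ : 0 < μ₂) (hx : 0 ≤ x) (hd : ⌈x / μ₂⌉₊ ≤ d) : (⌊μ₁ * x⌋₊ : ℝ) ≤ μ₁ * μ₂ * d :=
  calc (⌊μ₁ * x⌋₊ : ℝ) ≤ μ₁ * x := Nat.floor_le (mul_nonneg hμ₁ hx)
    _ = μ₁ * μ₂ * (x / μ₂) := by field_simp
    _ ≤ μ₁ * μ₂ * d := by
      gcongr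
      exact (Nat.le_ceil _).trans (Nat.cast_le.2 hd)

theorem stmt1_general (m n : ℕ)
    (p μ₁ μ₂ Dtil : ℝ) (hp : 1 ≤ p)
    (hμ₁ : 1 ≤ μ₁) (hμ₂ : 1 ≤ μ₂)
    (t d : Fin n → ℕ) (dtil : Fin n → ℝ) (P : Fin m → Fin n → ℝ)
    (hmono : Monotone fun j => t j)
    (harr : ∀ j, (t j : ℝ) ≤ μ₁ * Dtil)
    (hdtil : ∀ j, 1 ≤ dtil j ∧ dtil j ≤ Dtil)
    (hd : ∀ j, ⌈dtil j / μ₂⌉₊ ≤ d j ∧ d j ≤ ⌊μ₁ * dtil j⌋₊)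
    (hP : ∀ i j, 0 ≤ P i j)
    (y : Fin n → Fin m)
    (hy : IsGreedy m n P t dtil μ₁ p (p + Real.logb 2 (2 * μ₁ * Dtil)) y)
    (ystar : Fin n → Fin m) (j : Fin n) :
    ∑ s ∈ Finset.Icc 1 ⌊2 * μ₁ * Dtil⌋₊,
      ((∑ i, pseudoLoad m n P t dtil μ₁ y (j + 1) i s ^ p)
          ^ ((p + Real.logb 2 (2 * μ₁ * Dtil)) / p)
        - (∑ i, pseudoLoad m n P t dtil μ₁ y j i s ^ p)
          ^ ((p + Real.logb 2 (2 * μ₁ * Dtil)) / p))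
    ≤ μ₁ * μ₂ *
      ∑ s ∈ Finset.Icc 1 ⌊2 * μ₁ * Dtil⌋₊,
        ((∑ i, (pseudoLoad m n P t dtil μ₁ y n i s
              + trueLoad m n P t d ystar (j + 1) i s) ^ p)
            ^ ((p + Real.logb 2 (2 * μ₁ * Dtil)) / p)
          - (∑ i, (pseudoLoad m n P t dtil μ₁ y n i s
              + trueLoad m n P t d ystar j i s) ^ p)
            ^ ((p + Real.logb 2 (2 * μ₁ * Dtil)) / p)) := by
  set r := (p + Real.logb 2 (2 * μ₁ * Dtil)) / p
  -- `pseudoLoad` is `trueLoad` for the overestimated durations `e`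
  set e : Fin n → ℕ := fun k => ⌊μ₁ * dtil k⌋₊
  set ℓ : ℕ → ℕ → Fin m → ℝ := fun k s i => pseudoLoad m n P t dtil μ₁ y k i s
  set ℓstar : ℕ → ℕ → Fin m → ℝ := fun k s i => trueLoad m n P t d ystar k i s
  set c := P (ystar j) j
  set g : ℕ → ℝ := fun s => potential p r (ℓ j s + Pi.single (ystar j) c) - potential p r (ℓ j s)
  have hdtil₀ : 0 ≤ dtil j := zero_le_one.trans (hdtil j).1
  have hr : 1 ≤ r :=
    one_le_add_logb_div (by linarith) (by nlinarith [(hdtil j).1.trans (hdtil j).2])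
  have hdj : 1 ≤ d j :=
    (Nat.ceil_pos.2 (div_pos (by linarith [(hdtil j).1]) (by linarith))).trans_le (hd j).1
  have hfit : t j + e j ≤ ⌊2 * μ₁ * Dtil⌋₊ :=
    add_natFloor_mul_le_natFloor_two_mul (by linarith) hdtil₀ (harr j) (hdtil j).2
  have hg₀ : 0 ≤ g := fun s =>
    potential_add_single_sub_nonneg (by linarith) (by linarith) (trueLoad_nonneg P t e y hP j s)
      (ystar j) (hP _ _)
  have hg_anti : AntitoneOn g (Set.Ici (t j + 1)) := fun s hs s' _ hss' =>
    potential_add_single_sub_le hp hr (trueLoad_nonneg P t e y hP j s')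
      (trueLoad_antitone_time P t e y hmono hP j hs hss') (ystar j) (hP _ _)
  have hg_le : ∀ s, g s ≤ potential p r (ℓ n s + (ℓstar j s + Pi.single (ystar j) c))
      - potential p r (ℓ n s + ℓstar j s) := fun s => by
    rw [← add_assoc]
    refine potential_add_single_sub_le hp hr (trueLoad_nonneg P t e y hP j s) ?_ (ystar j) (hP _ _)
    exact le_add_of_le_of_nonneg (trueLoad_mono_jobs P t e y hP j.is_lt.le s)
      (trueLoad_nonneg P t d ystar hP j s)
  calc _ = _ := sum_sub_trueLoad_succ P t e y (fun _ u => potential p r u) j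
        (Icc_subset_Icc (by omega) hfit)
    _ ≤ ∑ s ∈ Icc (t j + 1) (t j + e j), g s := hy.sum_potential_le j (ystar j)
    _ ≤ μ₁ * μ₂ * ∑ s ∈ Icc (t j + 1) (t j + d j), g s :=
      sum_Icc_le_mul_sum_Icc hg₀ hg_anti hdj (hd j).2
        (natFloor_mul_le_mul_mul_of_natCeil_div_le (by linarith) (by linarith) hdtil₀ (hd j).1)
    _ ≤ _ := mul_le_mul_of_nonneg_left (sum_le_sum fun s _ => hg_le s) (by nlinarith)
    _ = _ := congrArg (μ₁ * μ₂ * ·)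
      (sum_sub_trueLoad_succ P t d ystar (fun s u => potential p r (ℓ n s + u)) j
        (Icc_subset_Icc (by omega) ((Nat.add_le_add_left (hd j).2 _).trans hfit))).symm

/-- with `p ≥ 1`, arrivals in `[0, μ₁·D̃]`, a greedy assignment `y`
and any assignment `y*`, every job `j` satisfies, with `T̃ = 2·μ₁·D̃`,
`q = p + log₂ T̃` and `μ = μ₁·μ₂`:
`Σ_{s=1}^{T̃} [(Σᵢ ℓ̃_{i,j}(s)^p)^{q/p} − (Σᵢ ℓ̃_{i,j−1}(s)^p)^{q/p}]
  ≤ μ · Σ_{s=1}^{T̃} [(Σᵢ (ℓ̃ᵢ(s)+ℓ*_{i,j}(s))^p)^{q/p} − (Σᵢ (ℓ̃ᵢ(s)+ℓ*_{i,j−1}(s))^p)^{q/p}]`. -/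
theorem stmt1 (m n : ℕ) (hm : 1 ≤ m)
    (p μ₁ μ₂ Dtil : ℝ) (hp : 1 ≤ p)
    (hμ₁ : 1 ≤ μ₁) (hμ₂ : 1 ≤ μ₂)
    (t d : Fin n → ℕ) (dtil : Fin n → ℝ) (P : Fin m → Fin n → ℝ)
    (hmono : Monotone fun j => t j)
    (harr : ∀ j, (t j : ℝ) ≤ μ₁ * Dtil)
    (hdtil : ∀ j, 1 ≤ dtil j ∧ dtil j ≤ Dtil)
    (hd : ∀ j, ⌈dtil j / μ₂⌉₊ ≤ d j ∧ d j ≤ ⌊μ₁ * dtil j⌋₊)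
    (hP : ∀ i j, 0 ≤ P i j)
    (y : Fin n → Fin m)
    (hy : IsGreedy m n P t dtil μ₁ p (p + Real.logb 2 (2 * μ₁ * Dtil)) y)
    (ystar : Fin n → Fin m) (j : Fin n) :
    ∑ s ∈ Finset.Icc 1 ⌊2 * μ₁ * Dtil⌋₊,
      ((∑ i, pseudoLoad m n P t dtil μ₁ y (j + 1) i s ^ p)
          ^ ((p + Real.logb 2 (2 * μ₁ * Dtil)) / p)
        - (∑ i, pseudoLoad m n P t dtil μ₁ y j i s ^ p)
          ^ ((p + Real.logb 2 (2 * μ₁ * Dtil)) / p))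
    ≤ μ₁ * μ₂ *
      ∑ s ∈ Finset.Icc 1 ⌊2 * μ₁ * Dtil⌋₊,
        ((∑ i, (pseudoLoad m n P t dtil μ₁ y n i s
              + trueLoad m n P t d ystar (j + 1) i s) ^ p)
            ^ ((p + Real.logb 2 (2 * μ₁ * Dtil)) / p)
          - (∑ i, (pseudoLoad m n P t dtil μ₁ y n i s
              + trueLoad m n P t d ystar j i s) ^ p)
            ^ ((p + Real.logb 2 (2 * μ₁ * Dtil)) / p)) :=
  stmt1_general m n p μ₁ μ₂ Dtil hp hμ₁ hμ₂ t d dtil P hmono harr hdtil hd hP y hy ystar j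
end

section
/- Let p ≥ 1, D ≥ 2, and let μ be a real with 1 ≤ μ ≤ D. For every scheduled instance on m machines in which every duration satisfies 1 ≤ d_j ≤ D: sup over t ∈ ℝ of ‖ℓ_μ(t)‖_p ≤ 100·μ·(1 + ln D) · sup over t ∈ ℝ of ‖ℓ(t)‖_p. -/
open Finset
open scoped Classical

/-! A job active at time `t` after stretching, with `v = t - a j ∈ (0, μ d j]`, is active at
time `t - s` before stretching iff `s ∈ [v - d j, v)`. So if a finite set `G` of shifts meets every
window `[v - L, v)` with `1 ≤ L ≤ D` and `0 < v ≤ μ L`, the stretched load vector at `t` is dominated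
by `∑ s ∈ G, ℓ (t - s)`, and Minkowski's inequality bounds its norm by `#G` times the supremum.
The geometric grid `{0} ∪ {(1 + 1/μ)^k : 0 ≤ k ≤ K}` is such a set once `(1 + 1/μ)^K ≥ μ D`,
which holds for `K = ⌈4 μ log D⌉`. -/

/-- Load of machine `i` at time `t : ℝ` in a scheduled instance on `m` machines
with `n` jobs: job `j` has arrival `a j`, duration `d j`, weight `w j` and
assigned machine `A j`; job `j` contributes at times `t` with
`a j < t ≤ a j + d j`. -/
noncomputable def machineLoad (m n : ℕ) (a d w : Fin n → ℝ) (A : Fin n → Fin m)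
    (i : Fin m) (t : ℝ) : ℝ :=
  ∑ j ∈ Finset.univ.filter (fun j : Fin n => A j = i ∧ a j < t ∧ t ≤ a j + d j), w j

noncomputable def loadNorm (m n : ℕ) (p : ℝ) (a d w : Fin n → ℝ) (A : Fin n → Fin m)
    (t : ℝ) : ℝ :=
  (∑ i, machineLoad m n a d w A i t ^ p) ^ (1 / p)

section Lp

variable {ι : Type*} [Fintype ι] {p : ℝ}

lemma Lp_le_Lp_of_le (hp : 0 < p) {x y : ι → ℝ} (hx : ∀ i, 0 ≤ x i) (hxy : ∀ i, x i ≤ y i) :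
    (∑ i, x i ^ p) ^ (1 / p) ≤ (∑ i, y i ^ p) ^ (1 / p) :=
  Real.rpow_le_rpow (sum_nonneg fun i _ => Real.rpow_nonneg (hx i) p)
    (sum_le_sum fun i _ => Real.rpow_le_rpow (hx i) (hxy i) hp.le) (by positivity)

lemma Lp_sum_le_sum_Lp {κ : Type*} (hp : 1 ≤ p) (s : Finset κ) {f : κ → ι → ℝ}
    (hf : ∀ k i, 0 ≤ f k i) :
    (∑ i, (∑ k ∈ s, f k i) ^ p) ^ (1 / p) ≤ ∑ k ∈ s, (∑ i, f k i ^ p) ^ (1 / p) := by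
  induction s using Finset.induction_on with
  | empty =>
    simp [Real.zero_rpow (by positivity : p ≠ 0), Real.zero_rpow (by positivity : p⁻¹ ≠ 0)]
  | insert k s hks ih =>
    simp only [sum_insert hks]
    exact (Real.Lp_add_le_of_nonneg _ hp (fun i _ => hf k i)
      (fun i _ => sum_nonneg fun k _ => hf k i)).trans (add_le_add_right ih _)

end Lp

section Grid

def IsStretchCover (μ D : ℝ) (G : Finset ℝ) : Prop :=
  ∀ L v : ℝ, 1 ≤ L → L ≤ D → 0 < v → v ≤ μ * L → ∃ s ∈ G, s ∈ Set.Ico (v - L) v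

noncomputable def geometricGrid (g : ℝ) (K : ℕ) : Finset ℝ :=
  insert 0 ((Icc (0 : ℤ) K).image (g ^ ·))

lemma card_geometricGrid_le (g : ℝ) (K : ℕ) : #(geometricGrid g K) ≤ K + 2 :=
  (card_insert_le _ _).trans (by simpa using card_image_le (s := Icc (0 : ℤ) K) (f := (g ^ ·)))

lemma isStretchCover_geometricGrid {μ D : ℝ} (hμ : 0 < μ) {K : ℕ}
    (hK : μ * D ≤ (1 + μ⁻¹) ^ K) : IsStretchCover μ D (geometricGrid (1 + μ⁻¹) K) := by
  intro L v hL hLD hv hvL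
  rcases le_or_gt v 1 with hv1 | hv1
  · exact ⟨0, mem_insert_self _ _, by linarith, hv⟩
  have hg : 1 < 1 + μ⁻¹ := by simp [hμ]
  obtain ⟨n, hnv, hvn⟩ := exists_mem_Ioc_zpow hv hg
  have hn0 : 0 ≤ n := by
    have := (one_lt_zpow_iff_right₀ hg).1 (hv1.trans_le hvn)
    omega
  have hnK : n ≤ K := by
    have hnK : (1 + μ⁻¹) ^ n < (1 + μ⁻¹) ^ (K : ℤ) := by
      rw [zpow_natCast]
      exact hnv.trans_le (hvL.trans ((mul_le_mul_of_nonneg_left hLD hμ.le).trans hK))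
    have := (zpow_lt_zpow_iff_right₀ hg).1 hnK
    omega
  refine ⟨_, mem_insert_of_mem (mem_image_of_mem _ (mem_Icc.2 ⟨hn0, hnK⟩)), ?_, hnv⟩
  have hg' : 1 + μ⁻¹ = (μ + 1) / μ := by field_simp
  rw [zpow_add_one₀ (by positivity), hg', mul_div_assoc', le_div_iff₀ hμ] at hvn
  rw [hg']
  -- `(v - L) (μ + 1) ≤ v μ` because `v ≤ μ L`
  nlinarith

lemma le_one_add_inv_pow_ceil {μ D : ℝ} (hμ : 1 ≤ μ) (hμD : μ ≤ D) :
    μ * D ≤ (1 + μ⁻¹) ^ ⌈4 * μ * Real.log D⌉₊ := by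
  have hμ0 : 0 < μ := by linarith
  have hlogD : 0 ≤ Real.log D := Real.log_nonneg (by linarith)
  have hlogμ : Real.log μ ≤ Real.log D := Real.log_le_log hμ0 hμD
  have hlogg : 1 ≤ 2 * μ * Real.log (1 + μ⁻¹) := by
    have h := Real.one_sub_inv_le_log_of_pos (by positivity : (0 : ℝ) < 1 + μ⁻¹)
    have e : 1 - (1 + μ⁻¹)⁻¹ = 1 / (μ + 1) := by field_simp; ring
    rw [e, div_le_iff₀ (by linarith)] at h
    nlinarith
  have hK := Nat.le_ceil (4 * μ * Real.log D)
  rw [Real.le_pow_iff_log_le (by nlinarith) (by positivity), Real.log_mul hμ0.ne' (by linarith)]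
  nlinarith [mul_le_mul_of_nonneg_right hK (by nlinarith : 0 ≤ Real.log (1 + μ⁻¹)),
    mul_nonneg hlogD (by linarith : 0 ≤ 2 * μ * Real.log (1 + μ⁻¹) - 1)]

lemma exists_isStretchCover_card_le {μ D : ℝ} (hμ : 1 ≤ μ) (hμD : μ ≤ D) :
    ∃ G, IsStretchCover μ D G ∧ (#G : ℝ) ≤ 100 * μ * (1 + Real.log D) := by
  set K := ⌈4 * μ * Real.log D⌉₊
  refine ⟨geometricGrid (1 + μ⁻¹) K,
    isStretchCover_geometricGrid (by linarith) (le_one_add_inv_pow_ceil hμ hμD), ?_⟩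
  have hcard : (#(geometricGrid (1 + μ⁻¹) K) : ℝ) ≤ K + 2 := by
    exact_mod_cast card_geometricGrid_le _ K
  have hlogD : 0 ≤ Real.log D := Real.log_nonneg (by linarith)
  have hK : (K : ℝ) < 4 * μ * Real.log D + 1 := Nat.ceil_lt_add_one (by positivity)
  nlinarith [mul_nonneg (by linarith : 0 ≤ μ - 1) hlogD]

end Grid

section Load

variable {m n : ℕ} {p : ℝ} {a d w : Fin n → ℝ} {A : Fin n → Fin m}

lemma machineLoad_nonneg (hw : ∀ j, 0 ≤ w j) (i : Fin m) (t : ℝ) :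
    0 ≤ machineLoad m n a d w A i t :=
  sum_nonneg fun j _ => hw j

lemma loadNorm_nonneg (hw : ∀ j, 0 ≤ w j) (t : ℝ) : 0 ≤ loadNorm m n p a d w A t :=
  Real.rpow_nonneg (sum_nonneg fun i _ => Real.rpow_nonneg (machineLoad_nonneg hw i t) p) _

lemma bddAbove_range_loadNorm (hp : 0 < p) (hw : ∀ j, 0 ≤ w j) :
    BddAbove (Set.range (loadNorm m n p a d w A)) := by
  refine ⟨(∑ _i : Fin m, (∑ j, w j) ^ p) ^ (1 / p), ?_⟩
  rintro _ ⟨t, rfl⟩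
  exact Lp_le_Lp_of_le hp (machineLoad_nonneg hw · t)
    fun i => sum_le_sum_of_subset_of_nonneg (filter_subset _ _) fun j _ _ => hw j

lemma machineLoad_stretch_le_sum {μ D : ℝ} {G : Finset ℝ} (hG : IsStretchCover μ D G)
    (hw : ∀ j, 0 ≤ w j) (hd : ∀ j, 1 ≤ d j ∧ d j ≤ D) (i : Fin m) (t : ℝ) :
    machineLoad m n a (fun j => μ * d j) w A i t ≤ ∑ s ∈ G, machineLoad m n a d w A i (t - s) := by
  simp only [machineLoad, sum_filter]
  rw [sum_comm]
  refine sum_le_sum fun j _ => ?_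
  split_ifs with hj
  · obtain ⟨s, hsG, hs⟩ := hG (d j) (t - a j) (hd j).1 (hd j).2 (by linarith [hj.2.1])
      (by linarith [hj.2.2])
    have hact : A j = i ∧ a j < t - s ∧ t - s ≤ a j + d j :=
      ⟨hj.1, by linarith [hs.2], by linarith [hs.1]⟩
    have hsum := single_le_sum (fun s _ => ite_nonneg (hw j) le_rfl) hsG
      (f := fun s => if A j = i ∧ a j < t - s ∧ t - s ≤ a j + d j then w j else 0)
    rwa [if_pos hact] at hsum
  · exact sum_nonneg fun s _ => ite_nonneg (hw j) le_rfl

lemma loadNorm_stretch_le_sum {μ D : ℝ} {G : Finset ℝ} (hG : IsStretchCover μ D G)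
    (hp : 1 ≤ p) (hw : ∀ j, 0 ≤ w j) (hd : ∀ j, 1 ≤ d j ∧ d j ≤ D) (t : ℝ) :
    loadNorm m n p a (fun j => μ * d j) w A t ≤ ∑ s ∈ G, loadNorm m n p a d w A (t - s) :=
  (Lp_le_Lp_of_le (by linarith) (machineLoad_nonneg hw · t)
    (machineLoad_stretch_le_sum hG hw hd · t)).trans
    (Lp_sum_le_sum_Lp hp G fun s i => machineLoad_nonneg hw i (t - s))

end Load

theorem stmt6_general (p D μ : ℝ) (hp : 1 ≤ p) (hμ1 : 1 ≤ μ) (hμD : μ ≤ D)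
    (m n : ℕ) (a d w : Fin n → ℝ) (A : Fin n → Fin m)
    (hw : ∀ j, 0 ≤ w j) (hd : ∀ j, 1 ≤ d j ∧ d j ≤ D) :
    (⨆ t : ℝ, loadNorm m n p a (fun j => μ * d j) w A t)
      ≤ 100 * μ * (1 + Real.log D) * ⨆ t : ℝ, loadNorm m n p a d w A t := by
  obtain ⟨G, hG, hcard⟩ := exists_isStretchCover_card_le hμ1 hμD
  have hS := le_ciSup (bddAbove_range_loadNorm (p := p) (by linarith) hw (a := a) (d := d) (A := A))
  refine ciSup_le fun t => ?_
  calc loadNorm m n p a (fun j => μ * d j) w A t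
      ≤ ∑ s ∈ G, loadNorm m n p a d w A (t - s) := loadNorm_stretch_le_sum hG hp hw hd t
    _ ≤ #G * ⨆ t : ℝ, loadNorm m n p a d w A t := by
      simpa using sum_le_sum fun s (_ : s ∈ G) => hS (t - s)
    _ ≤ _ := mul_le_mul_of_nonneg_right hcard ((loadNorm_nonneg hw 0).trans (hS 0))

/-- for `p ≥ 1`, `D ≥ 2`, `1 ≤ μ ≤ D`, and any scheduled instance
whose durations lie in `[1, D]`, blowing up all durations by the factor `μ`
increases the supremum over time of the `ℓ_p` norm of the load vector by at
most a factor `100·μ·(1 + ln D)`. -/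
theorem stmt6 (p D μ : ℝ) (hp : 1 ≤ p) (hD : 2 ≤ D) (hμ1 : 1 ≤ μ) (hμD : μ ≤ D)
    (m n : ℕ) (a d w : Fin n → ℝ) (A : Fin n → Fin m)
    (ha : ∀ j, 0 ≤ a j) (hw : ∀ j, 0 ≤ w j) (hd : ∀ j, 1 ≤ d j ∧ d j ≤ D) :
    (⨆ t : ℝ, loadNorm m n p a (fun j => μ * d j) w A t)
      ≤ 100 * μ * (1 + Real.log D) * ⨆ t : ℝ, loadNorm m n p a d w A t :=
  stmt6_general p D μ hp hμ1 hμD m n a d w A hw hd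
end

section
/- For all reals μ ≥ 2 and D ≥ 2μ, there exists a single-machine instance with unit weights and all durations in [1, D] such that ℓ(t) ≤ 1 for every time t ∈ ℝ, while ℓ_μ(D) ≥ (μ−1)·ln(D/μ). -/
open Finset
open scoped Classical

/-- Load at time `t : ℝ` of a single-machine instance with `n` jobs,
arrival times `a`, durations `d` and weights `w`: job `j` contributes
at times `t` with `a j < t ≤ a j + d j`. -/
noncomputable def singleLoad (n : ℕ) (a d w : Fin n → ℝ) (t : ℝ) : ℝ :=
  ∑ j ∈ Finset.univ.filter (fun j : Fin n => a j < t ∧ t ≤ a j + d j), w j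

/-!
Jobs arrive at `a_j = D (1 - r^j)` with durations `d_j = (D/μ) r^j`, where `r = 1 - 1/μ`.
Then `a_j + d_j = a_{j+1}`, so the jobs run one after another and the load never exceeds `1`;
but `a_j + μ d_j = D` for every `j`, so after stretching all jobs are running at time `D`.
Since `r^j ≥ exp (-j/(μ-1))`, all durations stay `≥ 1` as long as `j ≤ (μ-1) ln(D/μ)`,
which allows `⌈(μ-1) ln(D/μ)⌉` jobs.
-/

theorem singleLoad_le_one_of_le_arrival {n : ℕ} {a d : Fin n → ℝ}
    (h : ∀ j k, j < k → a j + d j ≤ a k) (t : ℝ) :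
    singleLoad n a d (fun _ => 1) t ≤ 1 := by
  rw [singleLoad, sum_const, nsmul_one, Nat.cast_le_one, card_le_one]
  intro j hj k hk
  simp only [mem_filter, mem_univ, true_and] at hj hk
  by_contra hne
  rcases lt_or_gt_of_ne hne with hjk | hkj
  · linarith [h j k hjk]
  · linarith [h k j hkj]

theorem singleLoad_eq_of_forall_active {n : ℕ} {a d : Fin n → ℝ} {t : ℝ}
    (h : ∀ j, a j < t ∧ t ≤ a j + d j) :
    singleLoad n a d (fun _ => 1) t = n := by
  rw [singleLoad, filter_true_of_mem fun j _ => h j, sum_const, card_univ, Fintype.card_fin,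
    nsmul_one]

theorem exp_neg_div_le_one_sub_inv_pow {μ : ℝ} (hμ : 1 < μ) (j : ℕ) :
    Real.exp (-(j / (μ - 1))) ≤ (1 - μ⁻¹) ^ j := by
  have hμ1 : 0 < μ - 1 := by linarith
  have hbase : Real.exp (-(1 / (μ - 1))) ≤ 1 - μ⁻¹ := by
    have hexp : μ / (μ - 1) ≤ Real.exp (1 / (μ - 1)) := by
      have := Real.add_one_le_exp (1 / (μ - 1))
      rwa [div_add_one hμ1.ne', add_sub_cancel] at this
    calc Real.exp (-(1 / (μ - 1))) = (Real.exp (1 / (μ - 1)))⁻¹ := Real.exp_neg _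
      _ ≤ (μ / (μ - 1))⁻¹ := inv_anti₀ (by positivity) hexp
      _ = 1 - μ⁻¹ := by field_simp
  calc Real.exp (-(j / (μ - 1))) = Real.exp (-(1 / (μ - 1))) ^ j := by
        rw [← Real.exp_nat_mul]; ring_nf
    _ ≤ (1 - μ⁻¹) ^ j := pow_le_pow_left₀ (Real.exp_pos _).le hbase j

noncomputable def stairArrival (μ D : ℝ) (j : ℕ) : ℝ := D * (1 - (1 - μ⁻¹) ^ j)

noncomputable def stairDuration (μ D : ℝ) (j : ℕ) : ℝ := D / μ * (1 - μ⁻¹) ^ j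

section Stair

variable {μ D : ℝ}

theorem one_sub_inv_mem_Icc (hμ : 1 ≤ μ) : 1 - μ⁻¹ ∈ Set.Icc 0 1 :=
  ⟨sub_nonneg.mpr (inv_le_one_of_one_le₀ hμ), sub_le_self _ (by positivity)⟩

theorem stairArrival_add_stairDuration (hμ : μ ≠ 0) (j : ℕ) :
    stairArrival μ D j + stairDuration μ D j = stairArrival μ D (j + 1) := by
  simp only [stairArrival, stairDuration, pow_succ]
  field_simp
  ring

theorem stairArrival_add_mul_stairDuration (hμ : μ ≠ 0) (j : ℕ) :
    stairArrival μ D j + μ * stairDuration μ D j = D := by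
  simp only [stairArrival, stairDuration]
  field_simp
  ring

theorem stairArrival_monotone (hμ : 1 ≤ μ) (hD : 0 ≤ D) : Monotone (stairArrival μ D) := by
  intro j k hjk
  obtain ⟨hr, hr1⟩ := one_sub_inv_mem_Icc hμ
  exact mul_le_mul_of_nonneg_left (sub_le_sub_left (pow_le_pow_of_le_one hr hr1 hjk) 1) hD

theorem stairArrival_nonneg (hμ : 1 ≤ μ) (hD : 0 ≤ D) (j : ℕ) : 0 ≤ stairArrival μ D j := by
  simpa [stairArrival] using stairArrival_monotone hμ hD (Nat.zero_le j)

theorem stairArrival_lt (hμ : 1 < μ) (hD : 0 < D) (j : ℕ) : stairArrival μ D j < D := by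
  have hr : 0 < 1 - μ⁻¹ := sub_pos.mpr (inv_lt_one_of_one_lt₀ hμ)
  have := pow_pos hr j
  unfold stairArrival
  nlinarith

theorem stairDuration_le (hμ : 1 ≤ μ) (hD : 0 ≤ D) (j : ℕ) : stairDuration μ D j ≤ D := by
  obtain ⟨hr, hr1⟩ := one_sub_inv_mem_Icc hμ
  calc stairDuration μ D j ≤ D / μ * 1 := by
        unfold stairDuration; gcongr; exact pow_le_one₀ hr hr1
    _ ≤ D := by rw [mul_one]; exact div_le_self hD hμ

theorem one_le_stairDuration (hμ : 1 < μ) (hD : 0 < D) {j : ℕ}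
    (hj : (j : ℝ) ≤ (μ - 1) * Real.log (D / μ)) : 1 ≤ stairDuration μ D j := by
  have hμ1 : 0 < μ - 1 := by linarith
  have hDμ : 0 < D / μ := by positivity
  have hexp : -Real.log (D / μ) ≤ -(j / (μ - 1)) := by
    rw [neg_le_neg_iff, div_le_iff₀ hμ1]
    linarith
  calc 1 = D / μ * Real.exp (-Real.log (D / μ)) := by
        rw [Real.exp_neg, Real.exp_log hDμ, mul_inv_cancel₀ hDμ.ne']
    _ ≤ D / μ * Real.exp (-(j / (μ - 1))) := by gcongr
    _ ≤ stairDuration μ D j := by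
        unfold stairDuration; gcongr; exact exp_neg_div_le_one_sub_inv_pow hμ j

end Stair

/-- for reals `μ ≥ 2` and `D ≥ 2μ` there is a single-machine
instance with unit weights, nonnegative arrivals and durations in `[1, D]`
whose load is at most `1` at every time, yet after blowing up all durations
by `μ`, the load at time `D` is at least `(μ-1)·ln(D/μ)`. -/
theorem stmt8 (μ D : ℝ) (hμ : 2 ≤ μ) (hD : 2 * μ ≤ D) :
    ∃ (n : ℕ) (a d : Fin n → ℝ),
      (∀ j, 0 ≤ a j) ∧ (∀ j, 1 ≤ d j ∧ d j ≤ D) ∧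
      (∀ t : ℝ, singleLoad n a d (fun _ => 1) t ≤ 1) ∧
      (μ - 1) * Real.log (D / μ) ≤ singleLoad n a (fun j => μ * d j) (fun _ => 1) D := by
  have hμ1 : 1 < μ := by linarith
  have hD0 : 0 < D := by linarith
  refine ⟨⌈(μ - 1) * Real.log (D / μ)⌉₊, fun j => stairArrival μ D j,
    fun j => stairDuration μ D j, fun j => stairArrival_nonneg hμ1.le hD0.le j,
    fun j => ⟨one_le_stairDuration hμ1 hD0 (Nat.lt_ceil.mp j.isLt).le,
      stairDuration_le hμ1.le hD0.le j⟩,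
    singleLoad_le_one_of_le_arrival fun j k hjk => ?_, ?_⟩
  · rw [stairArrival_add_stairDuration (by positivity)]
    exact stairArrival_monotone hμ1.le hD0.le (Nat.succ_le_of_lt hjk)
  · rw [singleLoad_eq_of_forall_active fun j =>
      ⟨stairArrival_lt hμ1 hD0 j, (stairArrival_add_mul_stairDuration (by positivity) j).ge⟩]
    exact Nat.le_ceil _
end

section
/- Let μ ≥ 2 and D ≥ 2μ be reals, and define (t_j)_{j≥1} by t_1 = 0 and t_{j+1} = t_j + (D − t_j)/μ. Then t_{j+1} − t_j = (D/μ)·(1 − 1/μ)^{j−1} for every j ≥ 1, the gaps t_{j+1} − t_j are strictly decreasing in j, and the largest index j* ≥ 2 with t_{j*} − t_{j*−1} ≥ 1 exists and satisfies 1 + (μ−1)·ln(D/μ) ≤ j* ≤ 2 + μ·ln(D/μ). -/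
open Real

/-! Unwinding the recurrence gives `D - t j = D (1 - 1/μ)^(j-1)`, so the gaps form a geometric
sequence with ratio `r = 1 - 1/μ` and first term `D/μ`. The gap `(D/μ) r^m` is at least `1` exactly
when `m ≤ log (D/μ) / -log r`, so `j* = ⌊log (D/μ) / -log r⌋ + 2`, and the bounds on `j*` come from
`1/μ ≤ -log r ≤ 1/(μ-1)`. -/

section Recurrence

variable {K : Type*} [Field K] {μ D : K} {t : ℕ → K}

theorem sub_eq_mul_pow_of_rec (hrec : ∀ j : ℕ, 1 ≤ j → t (j + 1) = t j + (D - t j) / μ)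
    {j : ℕ} (hj : 1 ≤ j) : D - t j = (D - t 1) * (1 - 1 / μ) ^ (j - 1) := by
  induction j, hj using Nat.le_induction with
  | base => simp
  | succ n hn ih =>
    calc D - t (n + 1) = (D - t n) * (1 - 1 / μ) := by rw [hrec n hn]; ring
      _ = (D - t 1) * (1 - 1 / μ) ^ (n + 1 - 1) := by
        rw [ih, mul_assoc, ← pow_succ, Nat.sub_add_cancel hn, Nat.add_sub_cancel]

theorem succ_sub_eq_of_rec (hrec : ∀ j : ℕ, 1 ≤ j → t (j + 1) = t j + (D - t j) / μ)
    {j : ℕ} (hj : 1 ≤ j) : t (j + 1) - t j = (D - t 1) / μ * (1 - 1 / μ) ^ (j - 1) := by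
  rw [hrec j hj]
  linear_combination sub_eq_mul_pow_of_rec hrec hj / μ

end Recurrence

theorem le_neg_log_one_sub {x : ℝ} (hx : x < 1) : x ≤ -log (1 - x) := by
  have := log_le_sub_one_of_pos (sub_pos.2 hx)
  linarith

theorem neg_log_one_sub_le {x : ℝ} (hx : x < 1) : -log (1 - x) ≤ x / (1 - x) := by
  have h := one_sub_inv_le_log_of_pos (sub_pos.2 hx)
  have : 1 - (1 - x)⁻¹ = -(x / (1 - x)) := by field_simp [(sub_pos.2 hx).ne']; ring
  linarith

theorem div_neg_log_one_sub_inv_mem_Icc {μ L : ℝ} (hμ : 1 < μ) (hL : 0 ≤ L) :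
    L / -log (1 - 1 / μ) ∈ Set.Icc ((μ - 1) * L) (μ * L) := by
  have hx : 1 / μ < 1 := (div_lt_one (by linarith)).2 hμ
  have hx0 : 0 < 1 / μ := by positivity
  have hupper := neg_log_one_sub_le hx
  rw [show 1 / μ / (1 - 1 / μ) = 1 / (μ - 1) by field_simp] at hupper
  constructor
  · calc (μ - 1) * L = L / (1 / (μ - 1)) := by field_simp
      _ ≤ L / -log (1 - 1 / μ) :=
        div_le_div_of_nonneg_left hL (hx0.trans_le (le_neg_log_one_sub hx)) hupper
  · calc L / -log (1 - 1 / μ) ≤ L / (1 / μ) :=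
          div_le_div_of_nonneg_left hL hx0 (le_neg_log_one_sub hx)
      _ = μ * L := by field_simp

theorem one_le_mul_pow_iff_le_floor {c r : ℝ} (hc : 1 ≤ c) (hr0 : 0 < r) (hr1 : r < 1) (m : ℕ) :
    1 ≤ c * r ^ m ↔ m ≤ ⌊log c / -log r⌋₊ := by
  have hx : 0 < -log r := neg_pos.2 (log_neg hr0 hr1)
  rw [Nat.le_floor_iff (div_nonneg (log_nonneg hc) hx.le), le_div_iff₀ hx,
    ← log_le_log_iff one_pos (by positivity), log_one, log_mul (by positivity) (by positivity),
    log_pow, mul_neg]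
  constructor <;> intro h <;> linarith

/-- For reals `μ ≥ 2`, `D ≥ 2μ`, and the sequence `t 1 = 0`,
`t (j+1) = t j + (D - t j)/μ`: the gaps are `(D/μ)·(1 - 1/μ)^(j-1)`, they are
strictly decreasing, and the largest index `j* ≥ 2` with `t j* - t (j*-1) ≥ 1`
exists and satisfies `1 + (μ-1)·ln(D/μ) ≤ j* ≤ 2 + μ·ln(D/μ)`. -/
theorem stmt10 (μ D : ℝ) (hμ : 2 ≤ μ) (hD : 2 * μ ≤ D) (t : ℕ → ℝ)
    (h1 : t 1 = 0)
    (hrec : ∀ j : ℕ, 1 ≤ j → t (j + 1) = t j + (D - t j) / μ) :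
    (∀ j : ℕ, 1 ≤ j → t (j + 1) - t j = D / μ * (1 - 1 / μ) ^ (j - 1)) ∧
    (∀ j k : ℕ, 1 ≤ j → j < k → t (k + 1) - t k < t (j + 1) - t j) ∧
    ∃ jstar : ℕ, 2 ≤ jstar ∧ 1 ≤ t jstar - t (jstar - 1) ∧
      (∀ j : ℕ, 2 ≤ j → 1 ≤ t j - t (j - 1) → j ≤ jstar) ∧
      1 + (μ - 1) * Real.log (D / μ) ≤ (jstar : ℝ) ∧
      (jstar : ℝ) ≤ 2 + μ * Real.log (D / μ) := by
  have hμ1 : 1 < μ := by linarith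
  have hr0 : 0 < 1 - 1 / μ := sub_pos.2 ((div_lt_one (by linarith)).2 hμ1)
  have hr1 : 1 - 1 / μ < 1 := sub_lt_self 1 (by positivity)
  have hc : 1 ≤ D / μ := (one_le_div (by linarith)).2 (by linarith)
  have gap (j : ℕ) (hj : 1 ≤ j) : t (j + 1) - t j = D / μ * (1 - 1 / μ) ^ (j - 1) := by
    simpa [h1] using succ_sub_eq_of_rec hrec hj
  obtain ⟨hlower, hupper⟩ := div_neg_log_one_sub_inv_mem_Icc hμ1 (log_nonneg hc)
  have hfloor_gt := Nat.sub_one_lt_floor (log (D / μ) / -log (1 - 1 / μ))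
  have hfloor_le := Nat.floor_le ((mul_nonneg (by linarith) (log_nonneg hc)).trans hlower)
  set n := ⌊log (D / μ) / -log (1 - 1 / μ)⌋₊
  have hmax (m : ℕ) : 1 ≤ t (m + 2) - t (m + 2 - 1) ↔ m ≤ n := by
    rw [show m + 2 - 1 = m + 1 by omega, gap (m + 1) (by omega), Nat.add_sub_cancel]
    exact one_le_mul_pow_iff_le_floor hc hr0 hr1 m
  refine ⟨gap, fun j k hj hjk => ?_, n + 2, by omega, (hmax n).2 le_rfl, fun j hj hgap => ?_, ?_, ?_⟩
  · rw [gap j hj, gap k (by omega)]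
    exact mul_lt_mul_of_pos_left (pow_lt_pow_right_of_lt_one₀ hr0 hr1 (by omega)) (by positivity)
  · obtain ⟨m, rfl⟩ : ∃ m, j = m + 2 := ⟨j - 2, by omega⟩
    have := (hmax m).1 hgap
    omega
  all_goals push_cast; linarith
end

section
/- Let q ≥ 1 and μ ≥ 1 be reals, let T be a finite index set, and let (x_t)_{t∈T} and (y_t)_{t∈T} be nonnegative reals. If (1+μ)·Σ_{t∈T} x_t^q ≤ μ·Σ_{t∈T} (x_t + y_t)^q, then Σ_{t∈T} x_t^q ≤ 2·μ·(5·μ·q)^q · Σ_{t∈T} y_t^q. -/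
open Finset

/-- If `(1+μ)·Σ xₜ^q ≤ μ·Σ (xₜ+yₜ)^q` for nonnegative reals and
`q, μ ≥ 1`, then `Σ xₜ^q ≤ 2·μ·(5·μ·q)^q · Σ yₜ^q` (real powers). -/
theorem stmt11 {T : Type*} (s : Finset T) (q μ : ℝ) (hq : 1 ≤ q) (hμ : 1 ≤ μ)
    (x y : T → ℝ) (hx : ∀ t ∈ s, 0 ≤ x t) (hy : ∀ t ∈ s, 0 ≤ y t)
    (h : (1 + μ) * ∑ t ∈ s, x t ^ q ≤ μ * ∑ t ∈ s, (x t + y t) ^ q) :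
    ∑ t ∈ s, x t ^ q ≤ 2 * μ * (5 * μ * q) ^ q * ∑ t ∈ s, y t ^ q := by
  have hq0 : (0:ℝ) < q := lt_of_lt_of_le one_pos hq
  have hμ0 : (0:ℝ) < μ := lt_of_lt_of_le one_pos hμ
  set A : ℝ := 4 * μ * q with hAdef
  have hA0 : (0:ℝ) < A := by positivity
  have hA1 : (1:ℝ) ≤ A := by nlinarith
  -- pointwise bound
  have key : ∀ t ∈ s, (x t + y t) ^ q ≤ (1 + 1/A) ^ q * x t ^ q + (1 + A) ^ q * y t ^ q := by
    intro t ht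
    have hxt := hx t ht; have hyt := hy t ht
    rcases le_or_gt (A * y t) (x t) with hc | hc
    · have h1 : y t ≤ 1/A * x t := by
        rw [one_div, inv_mul_eq_div, le_div_iff₀ hA0]; nlinarith
      have h2 : x t + y t ≤ (1 + 1/A) * x t := by
        calc x t + y t ≤ x t + 1/A * x t := by linarith
          _ = (1 + 1/A) * x t := by ring
      calc (x t + y t) ^ q ≤ ((1 + 1/A) * x t) ^ q :=
            Real.rpow_le_rpow (by linarith) h2 hq0.le
        _ = (1 + 1/A) ^ q * x t ^ q := Real.mul_rpow (by positivity) hxt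
        _ ≤ _ := le_add_of_nonneg_right (by positivity)
    · have h2 : x t + y t ≤ (1 + A) * y t := by nlinarith
      calc (x t + y t) ^ q ≤ ((1 + A) * y t) ^ q :=
            Real.rpow_le_rpow (by linarith) h2 hq0.le
        _ = (1 + A) ^ q * y t ^ q := Real.mul_rpow (by positivity) hyt
        _ ≤ _ := le_add_of_nonneg_left (by positivity)
  have sum_le : ∑ t ∈ s, (x t + y t) ^ q
      ≤ (1 + 1/A) ^ q * ∑ t ∈ s, x t ^ q + (1 + A) ^ q * ∑ t ∈ s, y t ^ q := by
    rw [Finset.mul_sum, Finset.mul_sum, ← Finset.sum_add_distrib]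
    exact Finset.sum_le_sum key
  have hS : (0:ℝ) ≤ ∑ t ∈ s, x t ^ q :=
    Finset.sum_nonneg fun t ht => Real.rpow_nonneg (hx t ht) q
  have hY : (0:ℝ) ≤ ∑ t ∈ s, y t ^ q :=
    Finset.sum_nonneg fun t ht => Real.rpow_nonneg (hy t ht) q
  -- bound (1+1/A)^q ≤ 1 + 1/(2μ)
  have hu : (1:ℝ)/(4*μ) ≤ 1/2 := by
    rw [div_le_div_iff₀ (by positivity) (by norm_num)]; nlinarith
  have hexp : (1 + 1/A) ^ q ≤ 1 + 1/(2*μ) := by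
    have e1 : (1 + 1/A) ^ q ≤ Real.exp (1/A) ^ q := by
      apply Real.rpow_le_rpow (by positivity) _ hq0.le
      have := Real.add_one_le_exp (1/A)
      linarith
    have e2 : Real.exp (1/A) ^ q = Real.exp (1/(4*μ)) := by
      rw [← Real.exp_mul]
      congr 1
      field_simp [hAdef]
      ring
    have e3 : Real.exp (1/(4*μ)) ≤ 1 / (1 - 1/(4*μ)) := by
      have h4 : (0:ℝ) < 1 - 1/(4*μ) := by
        have : (1:ℝ)/(4*μ) ≤ 1/2 := hu
        linarith
      rw [le_div_iff₀ h4]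
      have h5 : 1 - 1/(4*μ) ≤ Real.exp (-(1/(4*μ))) := by
        have := Real.add_one_le_exp (-(1/(4*μ))); linarith
      calc Real.exp (1/(4*μ)) * (1 - 1/(4*μ))
          ≤ Real.exp (1/(4*μ)) * Real.exp (-(1/(4*μ))) :=
            mul_le_mul_of_nonneg_left h5 (Real.exp_pos _).le
        _ = 1 := by rw [← Real.exp_add]; simp
    have e4 : 1 / (1 - 1/(4*μ)) ≤ 1 + 1/(2*μ) := by
      have h4 : (0:ℝ) < 1 - 1/(4*μ) := by linarith
      rw [div_le_iff₀ h4]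
      have h5 : (0:ℝ) < 4*μ := by positivity
      have h6 : (1:ℝ)/(4*μ) * (4*μ) = 1 := by field_simp
      have h7 : (1:ℝ)/(2*μ) * (2*μ) = 1 := by field_simp
      nlinarith [sq_nonneg (1/(4*μ)), mul_pos (show (0:ℝ) < 1/(4*μ) by positivity) (show (0:ℝ) < 1/(2*μ) by positivity)]
    calc (1 + 1/A) ^ q ≤ Real.exp (1/(4*μ)) := by rw [← e2]; exact e1
      _ ≤ 1 / (1 - 1/(4*μ)) := e3
      _ ≤ 1 + 1/(2*μ) := e4
  -- combine
  have step : (1/2 : ℝ) * ∑ t ∈ s, x t ^ q ≤ μ * (1 + A) ^ q * ∑ t ∈ s, y t ^ q := by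
    have c1 : μ * ∑ t ∈ s, (x t + y t) ^ q
        ≤ μ * ((1 + 1/A) ^ q * ∑ t ∈ s, x t ^ q + (1 + A) ^ q * ∑ t ∈ s, y t ^ q) :=
      mul_le_mul_of_nonneg_left sum_le hμ0.le
    have c2 : μ * (1 + 1/A) ^ q * ∑ t ∈ s, x t ^ q
        ≤ (μ + 1/2) * ∑ t ∈ s, x t ^ q := by
      apply mul_le_mul_of_nonneg_right _ hS
      have : μ * (1 + 1/(2*μ)) = μ + 1/2 := by field_simp
      nlinarith [mul_le_mul_of_nonneg_left hexp hμ0.le]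
    nlinarith [h, c1, c2]
  have final : μ * (1 + A) ^ q ≤ μ * (5 * μ * q) ^ q := by
    apply mul_le_mul_of_nonneg_left _ hμ0.le
    apply Real.rpow_le_rpow (by linarith) _ hq0.le
    have : (1:ℝ) ≤ μ * q := by nlinarith
    rw [hAdef]; nlinarith
  calc ∑ t ∈ s, x t ^ q = 2 * ((1/2 : ℝ) * ∑ t ∈ s, x t ^ q) := by ring
    _ ≤ 2 * (μ * (1 + A) ^ q * ∑ t ∈ s, y t ^ q) := by linarith [step]
    _ ≤ 2 * (μ * (5 * μ * q) ^ q * ∑ t ∈ s, y t ^ q) := by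
        have := mul_le_mul_of_nonneg_right final hY
        linarith
    _ = 2 * μ * (5 * μ * q) ^ q * ∑ t ∈ s, y t ^ q := by ring
end

section
/- Let m ≥ 1, let w ≥ 1 and z ≥ 1 be reals, let a_1,…,a_m ≥ 0 be reals, and suppose 0 ≤ x_i ≤ x'_i for every i ∈ {1,…,m}. Then (Σ_{i=1}^m (x_i + a_i)^w)^z − (Σ_{i=1}^m x_i^w)^z ≤ (Σ_{i=1}^m (x'_i + a_i)^w)^z − (Σ_{i=1}^m (x'_i)^w)^z. -/
open Finset

/-- Key lemma: for `p ≥ 1`, `t ↦ (t+a)^p - t^p` is monotone on `[0,∞)`. -/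
lemma key_rpow {p : ℝ} (hp : 1 ≤ p) {a s t : ℝ} (ha : 0 ≤ a) (hs : 0 ≤ s)
    (hst : s ≤ t) : (s + a) ^ p - s ^ p ≤ (t + a) ^ p - t ^ p := by
  have hderiv : ∀ x : ℝ, HasDerivAt (fun x : ℝ => (x + a) ^ p - x ^ p)
      (1 * p * (x + a) ^ (p - 1) - 1 * p * x ^ (p - 1)) x := by
    intro x
    exact (((hasDerivAt_id x).add_const a).rpow_const (Or.inr hp)).sub
      ((hasDerivAt_id x).rpow_const (Or.inr hp))
  have hmono : MonotoneOn (fun x : ℝ => (x + a) ^ p - x ^ p) (Set.Ici 0) := by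
    apply monotoneOn_of_deriv_nonneg (convex_Ici 0)
    · exact fun x _ => ((hderiv x).continuousAt).continuousWithinAt
    · exact fun x _ => ((hderiv x).differentiableAt).differentiableWithinAt
    · intro x hx
      rw [interior_Ici] at hx
      rw [(hderiv x).deriv]
      have h1 : x ^ (p - 1) ≤ (x + a) ^ (p - 1) :=
        Real.rpow_le_rpow (le_of_lt hx) (by linarith) (by linarith)
      nlinarith
  exact hmono hs (le_trans hs hst) hst

/-- Core scalar inequality. -/
lemma core_ineq (w z : ℝ) (hw : 1 ≤ w) (hz : 1 ≤ z) (S T u v aa : ℝ)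
    (hT : 0 ≤ T) (hTS : T ≤ S) (hu : 0 ≤ u) (huv : u ≤ v) (haa : 0 ≤ aa) :
    (S + (u + aa) ^ w) ^ z - (T + u ^ w) ^ z
      ≤ (S + (v + aa) ^ w) ^ z - (T + v ^ w) ^ z := by
  have hw0 : (0:ℝ) ≤ w := by linarith
  have hv : 0 ≤ v := le_trans hu huv
  have hεδ : (u + aa) ^ w - u ^ w ≤ (v + aa) ^ w - v ^ w := key_rpow hw haa hu huv
  have hε : 0 ≤ (u + aa) ^ w - u ^ w := by
    have h : u ^ w ≤ (u + aa) ^ w := Real.rpow_le_rpow hu (by linarith) hw0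
    linarith
  have huw : u ^ w ≤ v ^ w := Real.rpow_le_rpow hu huv hw0
  have huw0 : 0 ≤ u ^ w := Real.rpow_nonneg hu w
  have hvw0 : 0 ≤ v ^ w := Real.rpow_nonneg hv w
  set ε := (u + aa) ^ w - u ^ w with hεdef
  set δ := (v + aa) ^ w - v ^ w with hδdef
  have h1 : (T + u ^ w + (S - T + ε)) ^ z - (T + u ^ w) ^ z
      ≤ (T + v ^ w + (S - T + ε)) ^ z - (T + v ^ w) ^ z :=
    key_rpow hz (by linarith) (by linarith) (by linarith)
  have h2 : (T + v ^ w + (S - T + ε)) ^ z ≤ (T + v ^ w + (S - T + δ)) ^ z :=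
    Real.rpow_le_rpow (by linarith) (by linarith) (by linarith)
  have e1 : T + u ^ w + (S - T + ε) = S + (u + aa) ^ w := by rw [hεdef]; ring
  have e2 : T + v ^ w + (S - T + δ) = S + (v + aa) ^ w := by rw [hδdef]; ring
  rw [e1] at h1
  rw [e2] at h2
  linarith

/-- Single coordinate step. -/
lemma step_lemma (m : ℕ) (w z : ℝ) (hw : 1 ≤ w) (hz : 1 ≤ z)
    (a : Fin m → ℝ) (ha : ∀ i, 0 ≤ a i) (y : Fin m → ℝ) (hy : ∀ i, 0 ≤ y i)
    (j : Fin m) (v : ℝ) (hv : y j ≤ v) :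
    (∑ i, (y i + a i) ^ w) ^ z - (∑ i, y i ^ w) ^ z
      ≤ (∑ i, (Function.update y j v i + a i) ^ w) ^ z
        - (∑ i, Function.update y j v i ^ w) ^ z := by
  have hw0 : (0:ℝ) ≤ w := by linarith
  set S := ∑ i ∈ univ.erase j, (y i + a i) ^ w with hS
  set T := ∑ i ∈ univ.erase j, y i ^ w with hT
  have hTS : T ≤ S := by
    apply Finset.sum_le_sum
    intro i _
    exact Real.rpow_le_rpow (hy i) (by linarith [ha i]) hw0
  have hT0 : 0 ≤ T :=
    Finset.sum_nonneg fun i _ => Real.rpow_nonneg (hy i) w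
  have e1 : ∑ i, (y i + a i) ^ w = S + (y j + a j) ^ w := by
    rw [← Finset.add_sum_erase _ (fun i => (y i + a i) ^ w) (mem_univ j)]
    ring
  have e2 : ∑ i, y i ^ w = T + y j ^ w := by
    rw [← Finset.add_sum_erase _ (fun i => y i ^ w) (mem_univ j)]
    ring
  have e3 : ∑ i, (Function.update y j v i + a i) ^ w = S + (v + a j) ^ w := by
    rw [← Finset.add_sum_erase _ (fun i => (Function.update y j v i + a i) ^ w)
      (mem_univ j), Function.update_self]
    rw [Finset.sum_congr rfl fun i hi => by
      rw [Function.update_of_ne (Finset.ne_of_mem_erase hi)]]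
    ring
  have e4 : ∑ i, Function.update y j v i ^ w = T + v ^ w := by
    rw [← Finset.add_sum_erase _ (fun i => Function.update y j v i ^ w)
      (mem_univ j), Function.update_self]
    rw [Finset.sum_congr rfl fun i hi => by
      rw [Function.update_of_ne (Finset.ne_of_mem_erase hi)]]
    ring
  rw [e1, e2, e3, e4]
  exact core_ineq w z hw hz S T (y j) v (a j) hT0 hTS (hy j) hv (ha j)

/-- For `m ≥ 1`, reals `w, z ≥ 1`, nonnegative `aᵢ`, and
`0 ≤ xᵢ ≤ x'ᵢ`:
`(Σ (xᵢ+aᵢ)^w)^z − (Σ xᵢ^w)^z ≤ (Σ (x'ᵢ+aᵢ)^w)^z − (Σ (x'ᵢ)^w)^z` (real powers). -/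
theorem stmt14 (m : ℕ) (hm : 1 ≤ m) (w z : ℝ) (hw : 1 ≤ w) (hz : 1 ≤ z)
    (a x x' : Fin m → ℝ) (ha : ∀ i, 0 ≤ a i) (hx : ∀ i, 0 ≤ x i)
    (hxx : ∀ i, x i ≤ x' i) :
    (∑ i, (x i + a i) ^ w) ^ z - (∑ i, x i ^ w) ^ z
      ≤ (∑ i, (x' i + a i) ^ w) ^ z - (∑ i, x' i ^ w) ^ z := by
  classical
  suffices h : ∀ s : Finset (Fin m),
      (∑ i, (x i + a i) ^ w) ^ z - (∑ i, x i ^ w) ^ z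
        ≤ (∑ i, (s.piecewise x' x i + a i) ^ w) ^ z
          - (∑ i, s.piecewise x' x i ^ w) ^ z by
    have := h Finset.univ
    simpa [Finset.piecewise_univ] using this
  intro s
  induction s using Finset.induction_on with
  | empty => simp [Finset.piecewise_empty]
  | @insert j s hj ih =>
    refine le_trans ih ?_
    rw [Finset.piecewise_insert]
    have hy : ∀ i, 0 ≤ s.piecewise x' x i := by
      intro i
      by_cases h : i ∈ s <;>
        simp [Finset.piecewise, h, hx i, le_trans (hx i) (hxx i)]
    have hvj : s.piecewise x' x j ≤ x' j := by
      simp [Finset.piecewise, hj, hxx j]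
    exact step_lemma m w z hw hz a ha (s.piecewise x' x) hy j (x' j) hvj
end

section
/- Let g : ℕ → ℝ be nonnegative and nonincreasing, let n ≥ 1 be a natural number, and let μ ≥ 1 be a real. Then Σ_{t=1}^{n} g(t) ≤ μ · Σ_{t=1}^{⌈n/μ⌉} g(t). -/
open Finset

/-- For a nonnegative nonincreasing `g : ℕ → ℝ`, `n ≥ 1` and a
real `μ ≥ 1`: `Σ_{t=1}^{n} g t ≤ μ · Σ_{t=1}^{⌈n/μ⌉₊} g t`. -/
theorem stmt15 (g : ℕ → ℝ) (hg0 : ∀ t, 0 ≤ g t)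
    (hgmono : ∀ s t : ℕ, s ≤ t → g t ≤ g s)
    (n : ℕ) (hn : 1 ≤ n) (μ : ℝ) (hμ : 1 ≤ μ) :
    ∑ t ∈ Finset.Icc 1 n, g t ≤ μ * ∑ t ∈ Finset.Icc 1 ⌈(n : ℝ) / μ⌉₊, g t := by
  set m := ⌈(n : ℝ) / μ⌉₊ with hm
  have hμ0 : (0:ℝ) < μ := lt_of_lt_of_le one_pos hμ
  have hm1 : 1 ≤ m := Nat.one_le_ceil_iff.mpr (by positivity)
  have hSnn : 0 ≤ ∑ t ∈ Finset.Icc 1 m, g t :=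
    Finset.sum_nonneg fun t _ => hg0 t
  have hnμm : (n : ℝ) ≤ μ * m := by
    have := Nat.le_ceil ((n : ℝ) / μ)
    rw [div_le_iff₀ hμ0] at this
    linarith [this]
  by_cases hcase : n ≤ m
  · calc ∑ t ∈ Finset.Icc 1 n, g t
        ≤ ∑ t ∈ Finset.Icc 1 m, g t := by
          apply Finset.sum_le_sum_of_subset_of_nonneg
          · exact Finset.Icc_subset_Icc_right hcase
          · intro t _ _; exact hg0 t
      _ ≤ μ * ∑ t ∈ Finset.Icc 1 m, g t := le_mul_of_one_le_left hSnn hμ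
  · push_neg at hcase
    have hmn : m ≤ n := hcase.le
    have hsplit : Finset.Icc 1 n = Finset.Icc 1 m ∪ Finset.Icc (m+1) n := by
      ext x; simp only [Finset.mem_Icc, Finset.mem_union]; omega
    have hdisj : Disjoint (Finset.Icc 1 m) (Finset.Icc (m+1) n) := by
      apply Finset.disjoint_left.mpr
      intro a ha hb
      simp only [Finset.mem_Icc] at ha hb
      omega
    have htail : ∑ t ∈ Finset.Icc (m+1) n, g t ≤ (n - m : ℕ) * g m := by
      calc ∑ t ∈ Finset.Icc (m+1) n, g t
          ≤ ∑ _t ∈ Finset.Icc (m+1) n, g m := by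
            apply Finset.sum_le_sum
            intro t ht
            exact hgmono m t (by simp only [Finset.mem_Icc] at ht; omega)
        _ = (n - m : ℕ) * g m := by
            rw [Finset.sum_const, Nat.card_Icc, nsmul_eq_mul]
            congr 2
            omega
    have hhead : (m : ℝ) * g m ≤ ∑ t ∈ Finset.Icc 1 m, g t := by
      calc (m : ℝ) * g m = ∑ _t ∈ Finset.Icc 1 m, g m := by
            rw [Finset.sum_const, Nat.card_Icc, nsmul_eq_mul]
            norm_num
        _ ≤ ∑ t ∈ Finset.Icc 1 m, g t := by
            apply Finset.sum_le_sum
            intro t ht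
            exact hgmono t m (by simp only [Finset.mem_Icc] at ht; omega)
    have hcast : ((n - m : ℕ) : ℝ) = (n : ℝ) - m := by
      push_cast [Nat.cast_sub hmn]; ring
    have key : ((n - m : ℕ) : ℝ) * g m ≤ (μ - 1) * ∑ t ∈ Finset.Icc 1 m, g t := by
      have h1 : ((n - m : ℕ) : ℝ) * g m ≤ (μ - 1) * (m * g m) := by
        rw [hcast]
        have : (n : ℝ) - m ≤ (μ - 1) * m := by ring_nf; linarith
        nlinarith [hg0 m]
      have h2 : (μ - 1) * ((m:ℝ) * g m) ≤ (μ - 1) * ∑ t ∈ Finset.Icc 1 m, g t :=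
        mul_le_mul_of_nonneg_left hhead (by linarith)
      linarith
    rw [hsplit, Finset.sum_union hdisj]
    nlinarith [htail, key, hSnn]
end

section
/- Let μ ≥ 2 be an integer and consider μ² unit-weight jobs on m = μ machines, where for each t ∈ {0,…,μ−1} the jobs tμ+1,…,(t+1)μ arrive at time t. For every sequence σ : {1,…,μ²} → {1,…,μ} of machine choices, there exist integer durations d_j ∈ {1,…,μ} (so the distortion relative to the unit predicted durations is at most μ) such that under the assignment σ some machine has load at least μ at some integer time slot, while there exists an assignment of the same jobs under which every machine has load at most 2 at every integer time slot. -/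
open Finset

/-- Load of machine `i` at integer time slot `s`: the number of unit-weight
jobs assigned to `i` by `τ` that are alive at slot `s`, where job `j`
(0-indexed, `j : Fin (μ^2)`) arrives at time `j / μ` and has duration `d j`
(alive at slots `s` with arrival `< s ≤ arrival + d j`). -/
def obliviousLoad (μ : ℕ) (τ : Fin (μ ^ 2) → Fin μ) (d : Fin (μ ^ 2) → ℕ)
    (i : Fin μ) (s : ℕ) : ℕ :=
  (Finset.univ.filter (fun j : Fin (μ ^ 2) =>
    τ j = i ∧ (j : ℕ) / μ + 1 ≤ s ∧ s ≤ (j : ℕ) / μ + d j)).card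

/-- for an integer `μ ≥ 2`, `μ²` unit-weight jobs on `m = μ`
machines, where for each `t ∈ {0,…,μ−1}` the `μ` jobs `tμ+1,…,(t+1)μ` arrive
at time `t` (all predicted durations are `1` and every machine is allowed):
for every fixed assignment sequence `σ` (i.e. any deterministic algorithm that
sees only arrivals and predictions), there are integer durations
`d_j ∈ {1,…,μ}` (distortion at most `μ` w.r.t. the unit predictions) such that
under `σ` some machine reaches load at least `μ` at some time slot, while some
assignment `τ` of the same jobs keeps every machine's load at most `2` at
every time slot. -/
theorem stmt18 (μ : ℕ) (hμ : 2 ≤ μ) (σ : Fin (μ ^ 2) → Fin μ) :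
    ∃ d : Fin (μ ^ 2) → ℕ,
      (∀ j, 1 ≤ d j ∧ d j ≤ μ) ∧
      (∃ (i : Fin μ) (s : ℕ), μ ≤ obliviousLoad μ σ d i s) ∧
      ∃ τ : Fin (μ ^ 2) → Fin μ, ∀ (i : Fin μ) (s : ℕ), obliviousLoad μ τ d i s ≤ 2 := by
  have hμ0 : 0 < μ := by omega
  -- pigeonhole: some machine gets at least μ jobs under σ
  have hpig : ∃ i : Fin μ, μ ≤ (univ.filter (fun j => σ j = i)).card := by
    by_contra h
    push_neg at h
    have hsum : ∑ i : Fin μ, (univ.filter (fun j => σ j = i)).card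
        = Fintype.card (Fin (μ ^ 2)) := by
      rw [Fintype.card, Finset.card_eq_sum_card_fiberwise (f := σ)
        (t := univ) (fun x _ => mem_univ _)]
    have hlt : ∑ i : Fin μ, (univ.filter (fun j => σ j = i)).card
        < ∑ _i : Fin μ, μ := by
      apply Finset.sum_lt_sum_of_nonempty
      · exact ⟨⟨0, hμ0⟩, mem_univ _⟩
      · intro i _; exact h i
    simp [Fintype.card_fin] at hsum
    rw [hsum] at hlt
    simp at hlt
    nlinarith
  obtain ⟨i, hi⟩ := hpig
  obtain ⟨L, hLsub, hLcard⟩ := Finset.exists_subset_card_eq hi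
  have hdiv : ∀ j : Fin (μ ^ 2), (j : ℕ) / μ < μ := by
    intro j
    have h1 := j.isLt
    have h2 : (j : ℕ) < μ * μ := by nlinarith
    exact Nat.div_lt_of_lt_mul h2
  refine ⟨fun j => if j ∈ L then μ - (j : ℕ) / μ else 1, ?_, ?_, ?_⟩
  · intro j
    have := hdiv j
    dsimp only
    split
    · exact ⟨Nat.sub_pos_of_lt this, Nat.sub_le _ _⟩
    · exact ⟨le_refl 1, by omega⟩
  · refine ⟨i, μ, ?_⟩
    calc μ = L.card := hLcard.symm
    _ ≤ _ := by
      apply Finset.card_le_card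
      intro j hj
      simp only [mem_filter, mem_univ, true_and]
      have hσ : σ j = i := by
        have := hLsub hj
        simpa using this
      have hd := hdiv j
      refine ⟨hσ, by omega, ?_⟩
      simp only [if_pos hj]
      omega
  · -- good assignment τ
    have hcardL : Fintype.card ↥L = μ := by rw [Fintype.card_coe]; exact hLcard
    let e : ↥L ≃ Fin μ := Fintype.equivFinOfCardEq hcardL
    set τ : Fin (μ ^ 2) → Fin μ :=
      fun j => if h : j ∈ L then e ⟨j, h⟩ else ⟨(j : ℕ) % μ, Nat.mod_lt _ hμ0⟩ with hτ
    refine ⟨τ, ?_⟩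
    intro m s
    unfold obliviousLoad
    set A : Finset (Fin (μ ^ 2)) :=
      univ.filter (fun j => j ∈ L ∧ τ j = m) with hA
    set B : Finset (Fin (μ ^ 2)) :=
      univ.filter (fun j => j ∉ L ∧ (j : ℕ) % μ = (m : ℕ) ∧ (j : ℕ) / μ + 1 = s) with hB
    have hsub : (univ.filter (fun j : Fin (μ ^ 2) =>
        τ j = m ∧ (j : ℕ) / μ + 1 ≤ s ∧ s ≤ (j : ℕ) / μ +
          (if j ∈ L then μ - (j : ℕ) / μ else 1))) ⊆ A ∪ B := by
      intro j hj
      simp only [mem_filter, mem_univ, true_and] at hj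
      obtain ⟨hjm, hj1, hj2⟩ := hj
      by_cases hjL : j ∈ L
      · exact mem_union_left _ (by simp [hA, hjL, hjm])
      · refine mem_union_right _ ?_
        simp only [if_neg hjL] at hj2
        have hmod : (j : ℕ) % μ = (m : ℕ) := by
          have : τ j = ⟨(j : ℕ) % μ, Nat.mod_lt _ hμ0⟩ := by simp [hτ, hjL]
          rw [this] at hjm
          exact congrArg Fin.val hjm
        simp only [hB, mem_filter, mem_univ, true_and]
        exact ⟨hjL, hmod, by omega⟩
    have hAcard : A.card ≤ 1 := by
      apply Finset.card_le_one.mpr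
      intro a ha b hb
      simp only [hA, mem_filter, mem_univ, true_and] at ha hb
      obtain ⟨haL, ham⟩ := ha
      obtain ⟨hbL, hbm⟩ := hb
      have : τ a = e ⟨a, haL⟩ := by simp [hτ, haL]
      rw [this] at ham
      have : τ b = e ⟨b, hbL⟩ := by simp [hτ, hbL]
      rw [this] at hbm
      have := e.injective (ham.trans hbm.symm)
      exact Subtype.ext_iff.mp this
    have hBcard : B.card ≤ 1 := by
      apply Finset.card_le_one.mpr
      intro a ha b hb
      simp only [hB, mem_filter, mem_univ, true_and] at ha hb
      obtain ⟨-, ham, has⟩ := ha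
      obtain ⟨-, hbm, hbs⟩ := hb
      have hdm : (a : ℕ) / μ = (b : ℕ) / μ := by omega
      have : (a : ℕ) = (b : ℕ) := by
        rw [← Nat.div_add_mod (a : ℕ) μ, ← Nat.div_add_mod (b : ℕ) μ, hdm, ham, hbm]
      exact Fin.ext this
    calc _ ≤ (A ∪ B).card := Finset.card_le_card hsub
    _ ≤ A.card + B.card := Finset.card_union_le _ _
    _ ≤ 2 := by omega
end
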